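/- Pasting preserves decreasingness of label quadruples: if the quadruples (τ, σ, σ', τ') and (υ, σ', σ'', υ') of label lists are decreasing, then the quadruple (τ ++ υ, σ, σ'', τ' ++ υ') is decreasing. -/

import Mathlib

open Relation

universe u v

variable {α : Type u} {β : Type v}

/-- down-set of a set of labels -/
def ds (r : β → β → Prop) (S : Set β) : Set β := {b | ∃ a ∈ S, r b a}

/-- down-set of a multiset of labels -/
def dm (r : β → β → Prop) (M : Multiset β) : Set β := ds r {a | a ∈ M}

/-- down-set of a list of labels -/
def dl (r : β → β → Prop) (σ : List β) : Set β := ds r {a | a ∈ σ}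

/-- `M -s S`: remove from the multiset `M` all occurrences of elements of the set `S` -/
noncomputable def msub (M : Multiset β) (S : Set β) : Multiset β :=
  @Multiset.filter β (fun a => a ∉ S) (Classical.decPred _) M

/-- `M ≼_mul N` -/
def mulLe (r : β → β → Prop) (M N : Multiset β) : Prop :=
  ∃ I J K : Multiset β, M = I + K ∧ N = I + J ∧ ∀ k ∈ K, k ∈ dm r J

/-- `M ≺_mul N`: the multiset extension of `r` -/
def mulLt (r : β → β → Prop) (M N : Multiset β) : Prop :=
  ∃ I J K : Multiset β, M = I + K ∧ N = I + J ∧ (∀ k ∈ K, k ∈ dm r J) ∧ J ≠ 0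

/-- the one-step multiset extension of `r` -/
def mult1 (r : β → β → Prop) (M N : Multiset β) : Prop :=
  ∃ (a : β) (I K : Multiset β), M = I + K ∧ N = I + {a} ∧ ∀ b ∈ K, r b a

/-- the lexicographic maximum measure `|σ|` -/
noncomputable def lexmax (r : β → β → Prop) : List β → Multiset β
  | [] => 0
  | a :: σ => {a} + msub (lexmax r σ) (ds r {a})

/-- the quadruple of label lists `(τ, σ, σ', τ')` is decreasing -/
def Decreasing (r : β → β → Prop) (τ σ σ' τ' : List β) : Prop :=
  mulLe r (lexmax r (σ ++ τ')) (lexmax r τ + lexmax r σ) ∧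
  mulLe r (lexmax r (τ ++ σ')) (lexmax r τ + lexmax r σ)

/-- labeled rewrite sequences of the labeled ARS `B` -/
inductive LSeq (B : α → β → α → Prop) : α → List β → α → Prop
  | nil (a : α) : LSeq B a [] a
  | cons {a b c : α} {l : β} {σ : List β} :
      B a l b → LSeq B b σ c → LSeq B a (l :: σ) c

/-- labeled conversions of the labeled ARS `B` -/
inductive Conv (B : α → β → α → Prop) : α → List β → α → Prop
  | nil (a : α) : Conv B a [] a
  | fwd {a b c : α} {l : β} {σ : List β} :
      B a l b → Conv B b σ c → Conv B a (l :: σ) c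
  | bwd {a b c : α} {l : β} {σ : List β} :
      B b l a → Conv B b σ c → Conv B a (l :: σ) c

/-- the local peak `b ←lb a →lc c` is decreasing with respect to conversions -/
def LDConv (B : α → β → α → Prop) (r : β → β → Prop) (b c : α) (lb lc : β) : Prop :=
  ∃ (d b1 b2 c1 c2 : α) (σ1 σ3 τ1 τ3 : List β),
    Conv B b σ1 b1 ∧ (∀ l ∈ σ1, l ∈ ds r ({lc} : Set β)) ∧
    (b1 = b2 ∨ B b1 lb b2) ∧
    Conv B b2 σ3 d ∧ (∀ l ∈ σ3, l ∈ ds r ({lc, lb} : Set β)) ∧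
    Conv B c τ1 c1 ∧ (∀ l ∈ τ1, l ∈ ds r ({lb} : Set β)) ∧
    (c1 = c2 ∨ B c1 lc c2) ∧
    Conv B c2 τ3 d ∧ (∀ l ∈ τ3, l ∈ ds r ({lc, lb} : Set β))

/-- confluence of an abstract rewrite system -/
def Confluent (A : α → α → Prop) : Prop :=
  ∀ a b c : α, ReflTransGen A a b → ReflTransGen A a c →
    ∃ d, ReflTransGen A b d ∧ ReflTransGen A c d

/-! Writing `|·|` for `lexmax r`, one has `|σ ++ τ| = |σ| + (|τ| -s dl σ)`, and for a strict order
`≼_mul` is transitive, compatible with sums and with removing a down-set, and cancellative.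
Cancelling the common summand in the hypotheses yields `|υ'| -s dl σ' ≼ |υ|`,
`|σ'| -s dl τ ≼ |σ|` and `|σ''| -s dl υ ≼ |σ'|`; chaining the last two gives the second half of
the conclusion. For the first half, the elements of `|υ'| -s dl (σ ++ τ')` lying below `τ` are
absorbed by `|τ|`, and the others are dominated by `|υ| -s dl τ` through the first bound. -/

section DownSet

variable {β : Type v} {r : β → β → Prop}

lemma msub_eq_filter (M : Multiset β) (S : Set β) [DecidablePred (· ∈ S)] :
    msub M S = M.filter (· ∉ S) := by
  unfold msub
  congr

lemma mem_msub {M : Multiset β} {S : Set β} {a : β} : a ∈ msub M S ↔ a ∈ M ∧ a ∉ S := by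
  classical
  rw [msub_eq_filter, Multiset.mem_filter]

lemma msub_add (M N : Multiset β) (S : Set β) : msub (M + N) S = msub M S + msub N S := by
  classical
  simp only [msub_eq_filter, Multiset.filter_add]

lemma msub_msub (M : Multiset β) (S T : Set β) : msub (msub M S) T = msub M (S ∪ T) := by
  classical
  simp only [msub_eq_filter, Multiset.filter_filter, Set.mem_union, not_or, and_comm]

lemma msub_empty (M : Multiset β) : msub M ∅ = M := by
  classical
  simp [msub_eq_filter]

lemma msub_le_msub_of_subset {S T : Set β} (h : S ⊆ T) (M : Multiset β) :
    msub M T ≤ msub M S := by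
  classical
  simp only [msub_eq_filter]
  exact Multiset.monotone_filter_right M fun a ha haS => ha (h haS)

lemma msub_add_msub_compl (M : Multiset β) (S : Set β) : msub M S + msub M Sᶜ = M := by
  classical
  simp only [msub_eq_filter, Set.mem_compl_iff, not_not]
  rw [add_comm]
  exact Multiset.filter_add_not _ M

lemma ds_union (S T : Set β) : ds r (S ∪ T) = ds r S ∪ ds r T := by
  ext b
  simp only [ds, Set.mem_union, Set.mem_setOf_eq, or_and_right, exists_or]

lemma mem_ds_of_rel (htrans : Transitive r) {S : Set β} {a b : β} (ha : a ∈ ds r S)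
    (hba : r b a) : b ∈ ds r S := by
  obtain ⟨c, hc, hac⟩ := ha
  exact ⟨c, hc, htrans hba hac⟩

lemma dm_add (M N : Multiset β) : dm r (M + N) = dm r M ∪ dm r N := by
  simp only [dm, Multiset.mem_add, ← ds_union]
  rfl

lemma dl_append (σ τ : List β) : dl r (σ ++ τ) = dl r σ ∪ dl r τ := by
  simp only [dl, List.mem_append, ← ds_union]
  rfl

lemma dl_cons (a : β) (σ : List β) : dl r (a :: σ) = ds r {a} ∪ dl r σ := by
  simp only [dl, List.mem_cons, ← ds_union]
  rfl

lemma dm_singleton (a : β) : dm r {a} = ds r {a} := by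
  simp only [dm, Multiset.mem_singleton]
  rfl

end DownSet

section MulLe

variable {β : Type v} {r : β → β → Prop}

lemma mulLe_of_le {M N : Multiset β} (h : M ≤ N) : mulLe r M N := by
  classical
  exact ⟨M, N - M, 0, (add_zero M).symm, (add_tsub_cancel_of_le h).symm, by simp⟩

lemma mulLe_add {M N M' N' : Multiset β} (h : mulLe r M N) (h' : mulLe r M' N') :
    mulLe r (M + M') (N + N') := by
  obtain ⟨I, J, K, rfl, rfl, hK⟩ := h
  obtain ⟨I', J', K', rfl, rfl, hK'⟩ := h'
  refine ⟨I + I', J + J', K + K', by abel, by abel, fun k hk => ?_⟩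
  rw [dm_add]
  rcases Multiset.mem_add.1 hk with hk | hk
  exacts [Or.inl (hK k hk), Or.inr (hK' k hk)]

lemma mulLe_trans (htrans : Transitive r) {M N P : Multiset β}
    (h₁ : mulLe r M N) (h₂ : mulLe r N P) : mulLe r M P := by
  classical
  obtain ⟨I₁, J₁, K₁, rfl, hN, hK₁⟩ := h₁
  obtain ⟨I₂, J₂, K₂, hN', rfl, hK₂⟩ := h₂
  have hI : I₁ - I₂ ≤ K₂ := tsub_le_iff_left.2 (hN' ▸ hN ▸ le_add_right le_rfl)
  have hJ : J₁ ≤ I₂ - I₁ + K₂ := by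
    calc J₁ = I₂ + K₂ - I₁ := by rw [← hN', hN, add_tsub_cancel_left]
      _ ≤ I₂ - I₁ + K₂ := add_tsub_le_tsub_add
  have below : ∀ k ∈ K₂, k ∈ dm r (I₂ - I₁ + J₂) := fun k hk => by
    rw [dm_add]; exact Or.inr (hK₂ k hk)
  refine ⟨I₁ ∩ I₂, I₂ - I₁ + J₂, I₁ - I₂ + K₁, ?_, ?_, fun k hk => ?_⟩
  · rw [← add_assoc, add_comm _ (I₁ - I₂), Multiset.sub_add_inter]
  · rw [← add_assoc, add_comm _ (I₂ - I₁), Multiset.inter_comm, Multiset.sub_add_inter]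
  rcases Multiset.mem_add.1 hk with hk | hk
  · exact below k (Multiset.mem_of_le hI hk)
  obtain ⟨j, hj, hkj⟩ := hK₁ k hk
  rcases Multiset.mem_add.1 (Multiset.mem_of_le hJ hj) with hj | hj
  · exact ⟨j, Multiset.mem_add.2 (Or.inl hj), hkj⟩
  · exact mem_ds_of_rel htrans (below j hj) hkj

lemma mulLe_of_cons_mulLe_cons (htrans : Transitive r) (hirrefl : Irreflexive r) (a : β)
    {M N : Multiset β} (h : mulLe r (a ::ₘ M) (a ::ₘ N)) : mulLe r M N := by
  classical
  obtain ⟨I, J, K, hM, hN, hK⟩ := h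
  by_cases haI : a ∈ I
  · refine ⟨I.erase a, J, K, ?_, ?_, hK⟩
    · simpa [Multiset.erase_add_left_pos _ haI] using congrArg (·.erase a) hM
    · simpa [Multiset.erase_add_left_pos _ haI] using congrArg (·.erase a) hN
  have haK : a ∈ K := (Multiset.mem_add.1 (hM ▸ Multiset.mem_cons_self a M)).resolve_left haI
  have haJ : a ∈ J := (Multiset.mem_add.1 (hN ▸ Multiset.mem_cons_self a N)).resolve_left haI
  -- `a` was itself dominated by some `j ≠ a` of `J`, which takes over the role of `a`
  obtain ⟨j, hjJ, haj⟩ := hK a haK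
  have hja : j ≠ a := fun h => hirrefl a (h ▸ haj)
  refine ⟨I, J.erase a, K.erase a, ?_, ?_, fun k hk => ?_⟩
  · simpa [Multiset.erase_add_right_pos _ haK] using congrArg (·.erase a) hM
  · simpa [Multiset.erase_add_right_pos _ haJ] using congrArg (·.erase a) hN
  obtain ⟨i, hiJ, hki⟩ := hK k (Multiset.mem_of_mem_erase hk)
  by_cases hia : i = a
  · exact ⟨j, (Multiset.mem_erase_of_ne hja).2 hjJ, htrans (hia ▸ hki) haj⟩
  · exact ⟨i, (Multiset.mem_erase_of_ne hia).2 hiJ, hki⟩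

lemma mulLe_of_add_mulLe_add_left (htrans : Transitive r) (hirrefl : Irreflexive r)
    (I : Multiset β) {M N : Multiset β} (h : mulLe r (I + M) (I + N)) : mulLe r M N := by
  induction I using Multiset.induction_on with
  | empty => simpa using h
  | cons a I ih =>
    exact ih (mulLe_of_cons_mulLe_cons htrans hirrefl a (by simpa [Multiset.cons_add] using h))

lemma mulLe_add_of_mem_dm {M N X : Multiset β} (h : mulLe r M N)
    (hX : ∀ x ∈ X, x ∈ dm r N ∧ x ∉ dm r M) : mulLe r (M + X) N := by
  obtain ⟨I, J, K, rfl, rfl, hK⟩ := h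
  refine ⟨I, J, K + X, by abel, rfl, fun k hk => ?_⟩
  rcases Multiset.mem_add.1 hk with hk | hk
  · exact hK k hk
  obtain ⟨⟨t, ht, hkt⟩, hkM⟩ := hX k hk
  rcases Multiset.mem_add.1 ht with ht | ht
  · exact absurd ⟨t, Multiset.mem_add.2 (Or.inl ht), hkt⟩ hkM
  · exact ⟨t, ht, hkt⟩

lemma mulLe_msub_ds (htrans : Transitive r) (T : Set β) {M N : Multiset β} (h : mulLe r M N) :
    mulLe r (msub M (ds r T)) (msub N (ds r T)) := by
  obtain ⟨I, J, K, rfl, rfl, hK⟩ := h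
  refine ⟨msub I (ds r T), msub J (ds r T), msub K (ds r T), msub_add .., msub_add .., ?_⟩
  intro k hk
  obtain ⟨hkK, hkT⟩ := mem_msub.1 hk
  obtain ⟨j, hjJ, hkj⟩ := hK k hkK
  exact ⟨j, mem_msub.2 ⟨hjJ, fun hjT => hkT (mem_ds_of_rel htrans hjT hkj)⟩, hkj⟩

lemma dm_subset_of_mulLe (htrans : Transitive r) {M N : Multiset β} (h : mulLe r M N) :
    dm r M ⊆ dm r N := by
  obtain ⟨I, J, K, rfl, rfl, hK⟩ := h
  rw [dm_add, dm_add]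
  rintro b (hb | ⟨k, hk, hbk⟩)
  · exact Or.inl hb
  · exact Or.inr (mem_ds_of_rel htrans (hK k hk) hbk)

end MulLe

section Lexmax

variable {β : Type v} {r : β → β → Prop}

lemma lexmax_append (σ τ : List β) :
    lexmax r (σ ++ τ) = lexmax r σ + msub (lexmax r τ) (dl r σ) := by
  induction σ with
  | nil => simp [lexmax, dl, ds, msub_empty]
  | cons a σ ih =>
    rw [List.cons_append, lexmax, ih, msub_add, msub_msub, lexmax, dl_cons, Set.union_comm,
      add_assoc]

lemma ds_union_dm_msub_ds (htrans : Transitive r) (S : Set β) (M : Multiset β) :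
    ds r S ∪ dm r (msub M (ds r S)) = ds r S ∪ dm r M := by
  refine subset_antisymm (Set.union_subset_union_right _ ?_) ?_
  · rintro b ⟨a, ha, hba⟩
    exact ⟨a, (mem_msub.1 ha).1, hba⟩
  rintro b (hb | ⟨a, ha, hba⟩)
  · exact Or.inl hb
  by_cases haS : a ∈ ds r S
  · exact Or.inl (mem_ds_of_rel htrans haS hba)
  · exact Or.inr ⟨a, mem_msub.2 ⟨ha, haS⟩, hba⟩

lemma dl_eq_dm_lexmax (htrans : Transitive r) (σ : List β) : dl r σ = dm r (lexmax r σ) := by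
  induction σ with
  | nil => ext; simp [dl, dm, ds, lexmax]
  | cons a σ ih =>
    rw [dl_cons, ih, lexmax, dm_add, dm_singleton, ds_union_dm_msub_ds htrans]

end Lexmax

namespace Decreasing

variable {β : Type v} {r : β → β → Prop} {τ σ σ' τ' : List β}

lemma msub_mulLe_left (htrans : Transitive r) (hirrefl : Irreflexive r)
    (h : Decreasing r τ σ σ' τ') : mulLe r (msub (lexmax r τ') (dl r σ)) (lexmax r τ) := by
  refine mulLe_of_add_mulLe_add_left htrans hirrefl (lexmax r σ) ?_
  rw [← lexmax_append, add_comm]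
  exact h.1

lemma msub_mulLe_right (htrans : Transitive r) (hirrefl : Irreflexive r)
    (h : Decreasing r τ σ σ' τ') : mulLe r (msub (lexmax r σ') (dl r τ)) (lexmax r σ) := by
  refine mulLe_of_add_mulLe_add_left htrans hirrefl (lexmax r τ) ?_
  rw [← lexmax_append]
  exact h.2

lemma dl_subset (htrans : Transitive r) (h : Decreasing r τ σ σ' τ') :
    dl r σ' ⊆ dl r τ ∪ dl r σ := by
  have := dm_subset_of_mulLe htrans h.2
  rw [← dl_eq_dm_lexmax htrans, dm_add, ← dl_eq_dm_lexmax htrans, ← dl_eq_dm_lexmax htrans,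
    dl_append, Set.union_subset_iff] at this
  exact this.2

variable {υ σ'' υ' : List β}

lemma paste_left (htrans : Transitive r) (hirrefl : Irreflexive r)
    (h₁ : Decreasing r τ σ σ' τ') (h₂ : Decreasing r υ σ' σ'' υ') :
    mulLe r (lexmax r (σ ++ (τ' ++ υ'))) (lexmax r (τ ++ υ) + lexmax r σ) := by
  rw [← List.append_assoc, lexmax_append (σ ++ τ'), lexmax_append τ]
  set X := msub (lexmax r υ') (dl r (σ ++ τ'))
  have below : mulLe r (lexmax r (σ ++ τ') + msub X (dl r τ)ᶜ) (lexmax r τ + lexmax r σ) := by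
    refine mulLe_add_of_mem_dm h₁.1 fun x hx => ?_
    obtain ⟨hxX, hxτ⟩ := mem_msub.1 hx
    simp only [dm_add, ← dl_eq_dm_lexmax htrans]
    exact ⟨Or.inl (not_not.1 hxτ), (mem_msub.1 hxX).2⟩
  have above : mulLe r (msub X (dl r τ)) (msub (lexmax r υ) (dl r τ)) := by
    have hsub : dl r σ' ∪ dl r τ ⊆ dl r (σ ++ τ') ∪ dl r τ := by
      rw [dl_append]
      exact Set.union_subset
        (fun x hx => (h₁.dl_subset htrans hx).elim Or.inr (Or.inl ∘ Or.inl)) Set.subset_union_right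
    have hX : msub X (dl r τ) ≤ msub (msub (lexmax r υ') (dl r σ')) (dl r τ) := by
      rw [msub_msub, msub_msub]
      exact msub_le_msub_of_subset hsub _
    exact mulLe_trans htrans (mulLe_of_le hX)
      (mulLe_msub_ds htrans _ (h₂.msub_mulLe_left htrans hirrefl))
  rw [← msub_add_msub_compl X (dl r τ)]
  convert mulLe_add below above using 1 <;> abel

lemma paste_right (htrans : Transitive r) (hirrefl : Irreflexive r)
    (h₁ : Decreasing r τ σ σ' τ') (h₂ : Decreasing r υ σ' σ'' υ') :
    mulLe r (lexmax r (τ ++ υ ++ σ'')) (lexmax r (τ ++ υ) + lexmax r σ) := by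
  rw [lexmax_append (τ ++ υ), dl_append, Set.union_comm, ← msub_msub]
  refine mulLe_add (mulLe_of_le le_rfl) ?_
  exact mulLe_trans htrans (mulLe_msub_ds htrans _ (h₂.msub_mulLe_right htrans hirrefl))
    (h₁.msub_mulLe_right htrans hirrefl)

end Decreasing

/-- pasting preserves decreasingness -/
theorem pasting_preserves_decreasingness {β : Type v} (r : β → β → Prop)
    (htrans : Transitive r) (hirrefl : Irreflexive r)
    (τ σ σ' τ' υ σ'' υ' : List β)
    (h1 : Decreasing r τ σ σ' τ') (h2 : Decreasing r υ σ' σ'' υ') :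
    Decreasing r (τ ++ υ) σ σ'' (τ' ++ υ') :=
  ⟨h1.paste_left htrans hirrefl h2, h1.paste_right htrans hirrefl h2⟩
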